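/- Let f : [0,1] → E¹ be a continuous fuzzy-valued function such that f(y) ⊆ f(x) (levelwise inclusion of α-cuts) whenever x ≤ y, and such that f(x) ⊖_gH f(y) exists in E¹ for all 0 ≤ x < y ≤ 1. Then for every n ∈ ℕ, the approximation error E_{n,f} = inf{ D(f, g) : g(x) = ∑_{i=0}^n ψ_i(x)·u_i, ψ_i ∈ C([0,1],[0,1]), u_i ∈ E¹ } satisfies E_{n,f} ≤ 2 ω^F(f, 1/n). -/
import Mathlib


open Set Finset

/-- A fuzzy number, represented by the endpoint functions of its `α`-cuts
`[u]_α = [lo α, hi α]`, `α ∈ [0,1]`. -/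
structure FuzzyNumber where
  lo : ℝ → ℝ
  hi : ℝ → ℝ
  lo_mono : MonotoneOn lo (Icc 0 1)
  hi_anti : AntitoneOn hi (Icc 0 1)
  le : ∀ α ∈ Icc (0:ℝ) 1, lo α ≤ hi α

/-- Hausdorff distance between two compact intervals given by their endpoints. -/
noncomputable def dH (A B : ℝ × ℝ) : ℝ := max |A.1 - B.1| |A.2 - B.2|

/-- Supremum metric `d_∞` on (cut representations of) fuzzy numbers. -/
noncomputable def dInfty (u v : ℝ → ℝ × ℝ) : ℝ :=
  sSup {r | ∃ α ∈ Icc (0:ℝ) 1, r = dH (u α) (v α)}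

/-- The `α`-cut map of a fuzzy number. -/
def cuts (u : FuzzyNumber) : ℝ → ℝ × ℝ := fun α => (u.lo α, u.hi α)

/-- Fuzzy modulus of continuity of `f : [0,1] → E¹`. -/
noncomputable def modF (f : ℝ → FuzzyNumber) (δ : ℝ) : ℝ :=
  sSup {r | ∃ x ∈ Icc (0:ℝ) 1, ∃ y ∈ Icc (0:ℝ) 1, |x - y| < δ ∧
    r = dInfty (cuts (f x)) (cuts (f y))}

/-- The approximation error `E_{n,f} = inf { D(f,g) : g = ∑_{i=0}^n ψ_i·u_i }`
over continuous `ψ_i : [0,1] → [0,1]` and fuzzy numbers `u_i`. -/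
noncomputable def approxError (n : ℕ) (f : ℝ → FuzzyNumber) : ℝ :=
  sInf {r | ∃ (ψ : ℕ → ℝ → ℝ) (u : ℕ → FuzzyNumber),
    (∀ i ≤ n, ContinuousOn (ψ i) (Icc 0 1) ∧ ∀ x ∈ Icc (0:ℝ) 1, ψ i x ∈ Icc (0:ℝ) 1) ∧
    r = sSup {s | ∃ x ∈ Icc (0:ℝ) 1, s = dInfty (cuts (f x))
        (fun α => (∑ i ∈ Finset.range (n + 1), ψ i x * (u i).lo α,
                   ∑ i ∈ Finset.range (n + 1), ψ i x * (u i).hi α))}}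

-- auxiliary lemmas
lemma dH_nonneg (A B : ℝ × ℝ) : 0 ≤ dH A B :=
  le_trans (abs_nonneg _) (le_max_left _ _)

lemma dH_comm (A B : ℝ × ℝ) : dH A B = dH B A := by
  unfold dH; rw [abs_sub_comm, abs_sub_comm A.2]

lemma dH_triangle (A B C : ℝ × ℝ) : dH A C ≤ dH A B + dH B C := by
  unfold dH
  apply max_le
  · exact le_trans (abs_sub_le _ _ _) (add_le_add (le_max_left _ _) (le_max_left _ _))
  · exact le_trans (abs_sub_le _ _ _) (add_le_add (le_max_right _ _) (le_max_right _ _))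

lemma dInfty_nonneg (u v : ℝ → ℝ × ℝ) : 0 ≤ dInfty u v := by
  apply Real.sSup_nonneg
  rintro r ⟨α, hα, rfl⟩
  exact dH_nonneg _ _

lemma bddAbove_cutsdH (u v : FuzzyNumber) :
    BddAbove {r | ∃ α ∈ Icc (0:ℝ) 1, r = dH (cuts u α) (cuts v α)} := by
  refine ⟨max (max (u.lo 1 - v.lo 0) (v.lo 1 - u.lo 0))
    (max (u.hi 0 - v.hi 1) (v.hi 0 - u.hi 1)), ?_⟩
  rintro r ⟨α, hα, rfl⟩
  have h01 : (0:ℝ) ∈ Icc (0:ℝ) 1 := by norm_num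
  have h11 : (1:ℝ) ∈ Icc (0:ℝ) 1 := by norm_num
  have hul0 := u.lo_mono h01 hα hα.1
  have hul1 := u.lo_mono hα h11 hα.2
  have hvl0 := v.lo_mono h01 hα hα.1
  have hvl1 := v.lo_mono hα h11 hα.2
  have huh0 := u.hi_anti h01 hα hα.1
  have huh1 := u.hi_anti hα h11 hα.2
  have hvh0 := v.hi_anti h01 hα hα.1
  have hvh1 := v.hi_anti hα h11 hα.2
  apply max_le
  · refine le_trans (abs_sub_le_iff.2 ⟨?_, ?_⟩ : |(cuts u α).1 - (cuts v α).1| ≤ _)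
      (le_max_left _ _)
    · exact le_trans (by simp [cuts]; linarith) (le_max_left _ _)
    · exact le_trans (by simp [cuts]; linarith) (le_max_right _ _)
  · refine le_trans (abs_sub_le_iff.2 ⟨?_, ?_⟩ : |(cuts u α).2 - (cuts v α).2| ≤ _)
      (le_max_right _ _)
    · exact le_trans (by simp [cuts]; linarith) (le_max_left _ _)
    · exact le_trans (by simp [cuts]; linarith) (le_max_right _ _)

lemma dH_le_dInfty (u v : FuzzyNumber) {α : ℝ} (hα : α ∈ Icc (0:ℝ) 1) :
    dH (cuts u α) (cuts v α) ≤ dInfty (cuts u) (cuts v) :=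
  le_csSup (bddAbove_cutsdH u v) ⟨α, hα, rfl⟩

lemma dInfty_cuts_symm (u v : FuzzyNumber) :
    dInfty (cuts u) (cuts v) = dInfty (cuts v) (cuts u) := by
  unfold dInfty
  congr 1
  ext r
  constructor
  · rintro ⟨α, hα, rfl⟩; exact ⟨α, hα, (dH_comm _ _).symm⟩
  · rintro ⟨α, hα, rfl⟩; exact ⟨α, hα, (dH_comm _ _).symm⟩

lemma dInfty_cuts_triangle (u v w : FuzzyNumber) :
    dInfty (cuts u) (cuts w) ≤ dInfty (cuts u) (cuts v) + dInfty (cuts v) (cuts w) := by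
  apply Real.sSup_le
  · rintro r ⟨α, hα, rfl⟩
    exact le_trans (dH_triangle _ (cuts v α) _)
      (add_le_add (dH_le_dInfty u v hα) (dH_le_dInfty v w hα))
  · exact add_nonneg (dInfty_nonneg _ _) (dInfty_nonneg _ _)

noncomputable def clamp01 (s : ℝ) : ℝ := max 0 (min 1 s)

lemma clamp01_mono : Monotone clamp01 :=
  fun _ _ h => max_le_max le_rfl (min_le_min le_rfl h)

lemma clamp01_nonneg (s : ℝ) : 0 ≤ clamp01 s := le_max_left _ _
lemma clamp01_le_one (s : ℝ) : clamp01 s ≤ 1 := max_le zero_le_one (min_le_left _ _)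
lemma clamp01_of_nonpos {s : ℝ} (h : s ≤ 0) : clamp01 s = 0 :=
  max_eq_left (le_trans (min_le_right _ _) h)
lemma clamp01_of_one_le {s : ℝ} (h : 1 ≤ s) : clamp01 s = 1 := by
  rw [clamp01, min_eq_left h]; exact max_eq_right zero_le_one
lemma clamp01_continuous : Continuous clamp01 :=
  continuous_const.max (continuous_const.min continuous_id)
set_option maxHeartbeats 1000000 in
/-- Theorem 3.4: if `f : [0,1] → E¹` is continuous, `f(y) ⊆ f(x)` for `x ≤ y`,
and the gH-difference `f(x) ⊖_gH f(y)` always exists for `x < y`, then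
`E_{n,f} ≤ 2 ω^F(f, 1/n)` for all `n`. -/
theorem fuzzy_gH_jackson_estimate (f : ℝ → FuzzyNumber)
    (hcont : ∀ ε > (0:ℝ), ∀ x ∈ Icc (0:ℝ) 1, ∃ η > (0:ℝ),
      ∀ y ∈ Icc (0:ℝ) 1, |x - y| < η → dInfty (cuts (f x)) (cuts (f y)) < ε)
    (hincl : ∀ x ∈ Icc (0:ℝ) 1, ∀ y ∈ Icc (0:ℝ) 1, x ≤ y → ∀ α ∈ Icc (0:ℝ) 1,
      (f x).lo α ≤ (f y).lo α ∧ (f y).hi α ≤ (f x).hi α)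
    (hgH : ∀ x ∈ Icc (0:ℝ) 1, ∀ y ∈ Icc (0:ℝ) 1, x < y →
      ∃ w : FuzzyNumber,
        (∀ α ∈ Icc (0:ℝ) 1,
          (f x).lo α = (f y).lo α + w.lo α ∧ (f x).hi α = (f y).hi α + w.hi α) ∨
        (∀ α ∈ Icc (0:ℝ) 1,
          (f y).lo α = (f x).lo α - w.hi α ∧ (f y).hi α = (f x).hi α - w.lo α))
    (n : ℕ) (hn : 0 < n) :
    approxError n f ≤ 2 * modF f (1 / n) := by
  clear hincl hgH
  have hn' : (0:ℝ) < n := by exact_mod_cast hn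
  have h01 : (0:ℝ) ∈ Icc (0:ℝ) 1 := by norm_num
  set W := modF f (1 / n) with hWdef
  set D : ℝ → ℝ → ℝ := fun x y => dInfty (cuts (f x)) (cuts (f y)) with hDdef
  have hDsymm : ∀ x y, D x y = D y x := fun x y => dInfty_cuts_symm _ _
  have hDtri : ∀ x y z, D x z ≤ D x y + D y z := fun x y z => dInfty_cuts_triangle _ _ _
  have habs : ∀ a b : ℝ, |D 0 a - D 0 b| ≤ D b a := by
    intro a b
    rw [abs_sub_le_iff]
    constructor
    · have := hDtri 0 b a; linarith
    · have := hDtri 0 a b; rw [hDsymm b a]; linarith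
  -- continuity of x ↦ D 0 x on [0,1]
  have hcontOn : ContinuousOn (fun x => D 0 x) (Icc (0:ℝ) 1) := by
    rw [Metric.continuousOn_iff]
    intro b hb ε hε
    obtain ⟨η, hη, hball⟩ := hcont ε hε b hb
    refine ⟨η, hη, fun a ha hab => ?_⟩
    have h1 : |D 0 a - D 0 b| ≤ D b a := habs a b
    have h2 : D b a < ε := hball a ha (by rwa [Real.dist_eq, abs_sub_comm] at hab)
    calc dist (D 0 a) (D 0 b) = |D 0 a - D 0 b| := Real.dist_eq _ _
      _ ≤ D b a := h1
      _ < ε := h2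
  obtain ⟨M, hM⟩ := (isCompact_Icc.bddAbove_image hcontOn)
  have hMx : ∀ x ∈ Icc (0:ℝ) 1, D 0 x ≤ M := fun x hx => hM ⟨x, hx, rfl⟩
  have hbdd : BddAbove {r | ∃ x ∈ Icc (0:ℝ) 1, ∃ y ∈ Icc (0:ℝ) 1, |x - y| < 1 / (n:ℝ) ∧
      r = dInfty (cuts (f x)) (cuts (f y))} := by
    refine ⟨M + M, ?_⟩
    rintro r ⟨x, hx, y, hy, -, rfl⟩
    calc dInfty (cuts (f x)) (cuts (f y)) = D x y := rfl
      _ ≤ D x 0 + D 0 y := hDtri x 0 y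
      _ ≤ M + M := by rw [hDsymm x 0]; exact add_le_add (hMx x hx) (hMx y hy)
  have hmod : ∀ x ∈ Icc (0:ℝ) 1, ∀ y ∈ Icc (0:ℝ) 1, |x - y| < 1 / (n:ℝ) → D x y ≤ W :=
    fun x hx y hy hxy => le_csSup hbdd ⟨x, hx, y, hy, hxy, rfl⟩
  have hW0 : 0 ≤ W := by
    apply Real.sSup_nonneg
    rintro r ⟨x, hx, y, hy, -, rfl⟩
    exact dInfty_nonneg _ _
  -- the partition of unity and the nodes
  set ψ : ℕ → ℝ → ℝ :=
    fun i x => clamp01 ((n:ℝ) * x - i + 1) - clamp01 ((n:ℝ) * x - i) with hψdef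
  set u : ℕ → FuzzyNumber := fun i => f ((i:ℝ) / n) with hudef
  have hψ0 : ∀ i x, 0 ≤ ψ i x := fun i x =>
    sub_nonneg.2 (clamp01_mono (by linarith))
  have hψ1 : ∀ i x, ψ i x ≤ 1 := fun i x => by
    have := clamp01_le_one ((n:ℝ) * x - i + 1)
    have := clamp01_nonneg ((n:ℝ) * x - i)
    simp only [hψdef]; linarith
  have hψc : ∀ i, Continuous (ψ i) := fun i =>
    (clamp01_continuous.comp (by continuity)).sub (clamp01_continuous.comp (by continuity))
  have hsum : ∀ x ∈ Icc (0:ℝ) 1, ∑ i ∈ Finset.range (n + 1), ψ i x = 1 := by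
    intro x hx
    have hstep : ∀ i : ℕ, ψ i x =
        (fun j : ℕ => clamp01 ((n:ℝ) * x - j + 1)) i -
        (fun j : ℕ => clamp01 ((n:ℝ) * x - j + 1)) (i + 1) := by
      intro i
      simp only [hψdef]
      congr 1
      congr 1
      push_cast
      ring
    rw [Finset.sum_congr rfl (fun i _ => hstep i), Finset.sum_range_sub']
    have h1 : clamp01 ((n:ℝ) * x - (0:ℕ) + 1) = 1 := by
      apply clamp01_of_one_le
      have : 0 ≤ (n:ℝ) * x := mul_nonneg hn'.le hx.1
      push_cast
      linarith
    have h2 : clamp01 ((n:ℝ) * x - ((n:ℕ)+1:ℕ) + 1) = 0 := by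
      apply clamp01_of_nonpos
      have : (n:ℝ) * x ≤ n := by nlinarith [hx.2]
      push_cast
      linarith
    rw [h1, h2, sub_zero]
  have hψsupp : ∀ i : ℕ, ∀ x : ℝ, 0 < ψ i x → |x - (i:ℝ) / n| < 1 / (n:ℝ) := by
    intro i x hpos
    set t : ℝ := (n:ℝ) * x - i with ht
    have habs : |t| < 1 := by
      by_contra hcon
      push_neg at hcon
      rcases le_abs.1 hcon with h | h
      · have e1 : clamp01 (t + 1) = 1 := clamp01_of_one_le (by linarith)
        have e2 : clamp01 t = 1 := clamp01_of_one_le h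
        simp only [hψdef] at hpos
        rw [show (n:ℝ) * x - i + 1 = t + 1 from rfl, e1, e2] at hpos
        linarith
      · have e1 : clamp01 (t + 1) = 0 := clamp01_of_nonpos (by linarith)
        have e2 : clamp01 t = 0 := clamp01_of_nonpos (by linarith)
        simp only [hψdef] at hpos
        rw [show (n:ℝ) * x - i + 1 = t + 1 from rfl, e1, e2] at hpos
        linarith
    have hxi : x - (i:ℝ) / n = t / n := by field_simp [ht]; ring
    rw [hxi, abs_div, abs_of_pos hn']
    exact div_lt_div_of_pos_right habs hn'
  have hnode : ∀ i ∈ Finset.range (n+1), (i:ℝ)/n ∈ Icc (0:ℝ) 1 := by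
    intro i hi
    have hi' : (i:ℝ) ≤ n := by exact_mod_cast Nat.lt_succ_iff.1 (Finset.mem_range.1 hi)
    exact ⟨div_nonneg (Nat.cast_nonneg i) hn'.le, (div_le_one hn').2 hi'⟩
  have coord : ∀ x ∈ Icc (0:ℝ) 1, ∀ α ∈ Icc (0:ℝ) 1, ∀ g : FuzzyNumber → ℝ,
      (∀ v w : FuzzyNumber, |g v - g w| ≤ dH (cuts v α) (cuts w α)) →
      |g (f x) - ∑ i ∈ Finset.range (n+1), ψ i x * g (u i)| ≤ W := by
    intro x hx α hα g hg
    have h1 : g (f x) - ∑ i ∈ Finset.range (n+1), ψ i x * g (u i)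
        = ∑ i ∈ Finset.range (n+1), ψ i x * (g (f x) - g (u i)) := by
      rw [Finset.sum_congr rfl (fun i _ => mul_sub (ψ i x) _ _), Finset.sum_sub_distrib,
        ← Finset.sum_mul, hsum x hx, one_mul]
    rw [h1]
    calc |∑ i ∈ Finset.range (n+1), ψ i x * (g (f x) - g (u i))|
        ≤ ∑ i ∈ Finset.range (n+1), |ψ i x * (g (f x) - g (u i))| :=
          Finset.abs_sum_le_sum_abs _ _
      _ ≤ ∑ i ∈ Finset.range (n+1), ψ i x * W := by
          apply Finset.sum_le_sum
          intro i hi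
          rw [abs_mul, abs_of_nonneg (hψ0 i x)]
          rcases eq_or_lt_of_le (hψ0 i x) with h | h
          · rw [← h]; simp
          · refine mul_le_mul_of_nonneg_left ?_ (hψ0 i x)
            calc |g (f x) - g (u i)| ≤ dH (cuts (f x) α) (cuts (u i) α) := hg _ _
              _ ≤ dInfty (cuts (f x)) (cuts (u i)) := dH_le_dInfty _ _ hα
              _ ≤ W := hmod x hx _ (hnode i hi) (hψsupp i x h)
      _ = W := by rw [← Finset.sum_mul, hsum x hx, one_mul]
  have key : ∀ x ∈ Icc (0:ℝ) 1,
      dInfty (cuts (f x)) (fun α => (∑ i ∈ Finset.range (n+1), ψ i x * (u i).lo α,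
        ∑ i ∈ Finset.range (n+1), ψ i x * (u i).hi α)) ≤ W := by
    intro x hx
    apply Real.sSup_le _ hW0
    rintro r ⟨α, hα, rfl⟩
    apply max_le
    · exact coord x hx α hα (fun v => v.lo α) (fun v w => le_max_left _ _)
    · exact coord x hx α hα (fun v => v.hi α) (fun v w => le_max_right _ _)
  have hbddb : BddBelow {r | ∃ (ψ' : ℕ → ℝ → ℝ) (u' : ℕ → FuzzyNumber),
      (∀ i ≤ n, ContinuousOn (ψ' i) (Icc 0 1) ∧ ∀ x ∈ Icc (0:ℝ) 1, ψ' i x ∈ Icc (0:ℝ) 1) ∧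
      r = sSup {s | ∃ x ∈ Icc (0:ℝ) 1, s = dInfty (cuts (f x))
          (fun α => (∑ i ∈ Finset.range (n + 1), ψ' i x * (u' i).lo α,
                     ∑ i ∈ Finset.range (n + 1), ψ' i x * (u' i).hi α))}} := by
    refine ⟨0, ?_⟩
    rintro r ⟨ψ', u', -, rfl⟩
    apply Real.sSup_nonneg
    rintro s ⟨x, hx, rfl⟩
    exact dInfty_nonneg _ _
  have hle : approxError n f ≤ sSup {s | ∃ x ∈ Icc (0:ℝ) 1, s = dInfty (cuts (f x))
      (fun α => (∑ i ∈ Finset.range (n + 1), ψ i x * (u i).lo α,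
                 ∑ i ∈ Finset.range (n + 1), ψ i x * (u i).hi α))} := by
    refine csInf_le hbddb ?_
    exact ⟨ψ, u, fun i _ => ⟨(hψc i).continuousOn, fun x _ => ⟨hψ0 i x, hψ1 i x⟩⟩, rfl⟩
  refine le_trans hle (le_trans (Real.sSup_le ?_ hW0) (by linarith))
  rintro s ⟨x, hx, rfl⟩
  exact key x hx
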